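/- arXiv:1003.4722 — 5 statements merged into one kernel-verified Lean document; each statement's English description precedes it below -/
import Mathlib

section
/- Let G be a finite group, S a Sylow p-subgroup of G, and N a normal subgroup of G. Then SN/N is a Sylow p-subgroup of G/N, and the Frattini subgroup of SN/N equals Φ(S)N/N. -/
/-!
For a finite `p`-group `P` one has `Φ(P) = P' P^p`: a maximal subgroup is normal of index `p`,
so it contains `P'` and `P^p`; conversely `P / P' P^p` is elementary abelian, i.e. an
`𝔽_p`-vector space, in which every nonzero vector is avoided by some hyperplane. The subgroup
`P' P^p` is visibly compatible with surjective homomorphisms, and `SN/N` is the image of the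
`p`-group `S` under `G → G/N`.
-/

theorem Order.radical_submodule_eq_bot (K V : Type*) [DivisionRing K] [AddCommGroup V]
    [Module K V] : Order.radical (Submodule K V) = ⊥ := by
  refine eq_bot_iff.mpr fun v hv => ?_
  by_contra hv0
  obtain ⟨f, hf⟩ := Module.Projective.exists_dual_ne_zero K hv0
  have hker : IsCoatom (LinearMap.ker f) :=
    LinearMap.isCoatom_ker_of_surjective <|
      LinearMap.surjective_of_ne_zero fun h => hf (by simp [h])
  exact hf (Order.radical_le_coatom hker hv)

open scoped IsMulCommutative in
theorem frattini_eq_bot_of_pow_eq_one {Q : Type*} [Group Q] [IsMulCommutative Q] {p : ℕ}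
    [Fact p.Prime] (h : ∀ a : Q, a ^ p = 1) : frattini Q = ⊥ := by
  let _ := AddCommGroup.zmodModule (n := p) (G := Additive Q) h
  have := ((Subgroup.toAddSubgroup (G := Q)).trans
    (AddSubgroup.toZModSubmodule (M := Additive Q) p)).map_radical
  rwa [Order.radical_submodule_eq_bot, _root_.map_eq_bot_iff] at this

section
variable {G : Type*} [Group G]

theorem Group.conjugatesOfSet_range_pow (n : ℕ) :
    Group.conjugatesOfSet (Set.range fun g : G => g ^ n) = Set.range fun g : G => g ^ n := by
  refine Set.Subset.antisymm ?_ Group.subset_conjugatesOfSet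
  intro _ hx
  obtain ⟨_, ⟨g, rfl⟩, hconj⟩ := Group.mem_conjugatesOfSet_iff.mp hx
  obtain ⟨c, rfl⟩ := isConj_iff.mp hconj
  exact ⟨c * g * c⁻¹, conj_pow⟩

instance Subgroup.normal_closure_range_pow (n : ℕ) :
    (Subgroup.closure (Set.range fun g : G => g ^ n)).Normal := by
  simpa only [Subgroup.normalClosure, Group.conjugatesOfSet_range_pow] using
    Subgroup.normalClosure_normal (s := Set.range fun g : G => g ^ n)

theorem Subgroup.closure_range_pow_le_iff {N : Subgroup G} [N.Normal] {n : ℕ} :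
    Subgroup.closure (Set.range fun g : G => g ^ n) ≤ N ↔ ∀ x : G ⧸ N, x ^ n = 1 := by
  rw [Subgroup.closure_le, Set.range_subset_iff, (QuotientGroup.mk_surjective (s := N)).forall]
  simp only [← QuotientGroup.mk_pow, QuotientGroup.eq_one_iff, SetLike.mem_coe]

theorem Subgroup.map_commutator_sup_closure_range_pow {H : Type*} [Group H] {f : G →* H}
    (hf : Function.Surjective f) (n : ℕ) :
    (_root_.commutator G ⊔ Subgroup.closure (Set.range fun g : G => g ^ n)).map f =
      _root_.commutator H ⊔ Subgroup.closure (Set.range fun h : H => h ^ n) := by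
  rw [Subgroup.map_sup, _root_.map_commutator_eq, f.range_eq_top.mpr hf,
    ← _root_.commutator_def, MonoidHom.map_closure, ← Set.range_comp]
  have hpow : f ∘ (fun g : G => g ^ n) = (fun h : H => h ^ n) ∘ f := funext fun g => map_pow f g n
  rw [hpow, hf.range_comp]

theorem Subgroup.isSimpleGroup_quotient_of_isCoatom {M : Subgroup G} [M.Normal]
    (hM : IsCoatom M) : IsSimpleGroup (G ⧸ M) := by
  have : IsSimpleOrder (Subgroup (G ⧸ M)) :=
    ((QuotientGroup.comapMk'OrderIso M).trans (OrderIso.refl (Set.Ici M))).isSimpleOrder_iff.mpr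
      (Set.isSimpleOrder_Ici_iff_isCoatom.mpr hM)
  have : Nontrivial (G ⧸ M) := Subgroup.nontrivial_iff.mp inferInstance
  exact ⟨fun H _ => eq_bot_or_eq_top H⟩
end

namespace IsPGroup
variable {P : Type*} [Group P] [Finite P] {p : ℕ} [Fact p.Prime]

theorem normal_of_isCoatom (hP : IsPGroup p P) {M : Subgroup P} (hM : IsCoatom M) : M.Normal :=
  have := hP.isNilpotent
  Subgroup.NormalizerCondition.normal_of_coatom M Group.normalizerCondition_of_isNilpotent hM

theorem card_quotient_of_isCoatom (hP : IsPGroup p P) {M : Subgroup P} [M.Normal]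
    (hM : IsCoatom M) : Nat.card (P ⧸ M) = p := by
  have := hP.isNilpotent
  have := Subgroup.isSimpleGroup_quotient_of_isCoatom hM
  have hprime : (Nat.card (P ⧸ M)).Prime := IsSimpleGroup.prime_card
  refine ((Nat.prime_dvd_prime_iff_eq Fact.out hprime).mp ?_).symm
  exact (hP.to_quotient M).card_eq_or_dvd.resolve_left hprime.ne_one

theorem frattini_eq (hP : IsPGroup p P) :
    frattini P = commutator P ⊔ Subgroup.closure (Set.range fun g : P => g ^ p) := by
  set V := commutator P ⊔ Subgroup.closure (Set.range fun g : P => g ^ p)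
  have hV : ∀ {N : Subgroup P} [N.Normal],
      V ≤ N ↔ IsMulCommutative (P ⧸ N) ∧ ∀ x : P ⧸ N, x ^ p = 1 := by
    intro N _
    rw [sup_le_iff, Subgroup.Normal.quotient_commutative_iff_commutator_le,
      Subgroup.closure_range_pow_le_iff]
  refine le_antisymm ?_ (le_iInf₂ fun M hM => ?_)
  · obtain ⟨_, hpow⟩ := hV.mp le_rfl
    have hbot : frattini (P ⧸ V) = ⊥ := frattini_eq_bot_of_pow_eq_one hpow
    simpa [hbot] using frattini_le_comap_frattini_of_surjective (QuotientGroup.mk'_surjective V)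
  · have := hP.normal_of_isCoatom hM
    have := Subgroup.isSimpleGroup_quotient_of_isCoatom hM
    have := hP.isNilpotent
    refine hV.mpr ⟨inferInstance, fun x => ?_⟩
    rw [← hP.card_quotient_of_isCoatom hM]
    exact pow_card_eq_one'

theorem map_frattini_of_surjective (hP : IsPGroup p P) {Q : Type*} [Group Q] {f : P →* Q}
    (hf : Function.Surjective f) : (frattini P).map f = frattini Q := by
  have := Finite.of_surjective f hf
  rw [hP.frattini_eq, (hP.of_surjective f hf).frattini_eq,
    Subgroup.map_commutator_sup_closure_range_pow hf]

end IsPGroup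

/-- If `S` is a Sylow `p`-subgroup of a finite group `G` and `N ⊴ G`, then `SN/N` is a
Sylow `p`-subgroup of `G/N`, and `Φ(SN/N) = Φ(S)N/N`. -/
theorem sylow_quotient_and_frattini {G : Type*} [Group G] [Finite G] {p : ℕ} [Fact p.Prime]
    (S : Sylow p G) (N : Subgroup G) [N.Normal] :
    ∃ T : Sylow p (G ⧸ N),
      (T : Subgroup (G ⧸ N)) = Subgroup.map (QuotientGroup.mk' N) (S : Subgroup G) ∧
      (frattini ↥(T : Subgroup (G ⧸ N))).map (T : Subgroup (G ⧸ N)).subtype =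
        Subgroup.map (QuotientGroup.mk' N)
          ((frattini ↥(S : Subgroup G)).map (S : Subgroup G).subtype) := by
  have hmk := QuotientGroup.mk'_surjective N
  refine ⟨S.mapSurjective hmk, Sylow.coe_mapSurjective hmk S, ?_⟩
  rw [Sylow.coe_mapSurjective, ← S.isPGroup'.map_frattini_of_surjective
    ((QuotientGroup.mk' N).subgroupMap_surjective S), Subgroup.map_map, Subgroup.map_map]
  rfl
end

section
/- Let G be a finite group and N a normal subgroup such that for every prime p and every Sylow p-subgroup S_p of G, N ∩ S_p ≤ Φ(S_p). Then N is nilpotent. -/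
/-!
Every maximal subgroup `M` of `G` contains `N`, so `N ≤ Φ(G)`, which is nilpotent. Otherwise
`G = MN`; take a prime `p ∣ [G : M]`. The image in `G/N` of a Sylow `p`-subgroup `Q` of `M` is a
Sylow subgroup of `G/N`, so a Sylow `p`-subgroup `S ≥ Q` of `G` lies in `QN`. Then
`S = Q (N ∩ S) ≤ Q Φ(S)`, whence `S = Q ≤ M`, contradicting `p ∣ [G : M]`.
-/

open Subgroup

section

variable {G : Type*} [Group G]

theorem QuotientGroup.mk'_comp_subtype_surjective_of_sup_eq_top {M N : Subgroup G} [N.Normal]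
    (hMN : M ⊔ N = ⊤) : Function.Surjective ((QuotientGroup.mk' N).comp M.subtype) := by
  rw [← MonoidHom.range_eq_top, MonoidHom.range_comp, range_subtype,
    ← map_top_of_surjective _ (QuotientGroup.mk'_surjective N), map_eq_map_iff,
    QuotientGroup.ker_mk', hMN, top_sup_eq]

theorem Sylow.exists_le_inf_sup_of_sup_eq_top [Finite G] {M N : Subgroup G} [N.Normal]
    (hMN : M ⊔ N = ⊤) (p : ℕ) [Fact p.Prime] :
    ∃ S : Sylow p G, (S : Subgroup G) ≤ ((S : Subgroup G) ⊓ M) ⊔ N := by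
  set π := QuotientGroup.mk' N
  obtain ⟨Q⟩ : Nonempty (Sylow p M) := inferInstance
  let Qbar := Q.mapSurjective (QuotientGroup.mk'_comp_subtype_surjective_of_sup_eq_top hMN)
  obtain ⟨S, hQS⟩ := (Q.2.map M.subtype).exists_le_sylow
  have hS : (S : Subgroup G).map π = (Q : Subgroup M).map (π.comp M.subtype) :=
    Qbar.is_maximal' (S.2.map π) (by rw [Sylow.coe_mapSurjective, ← map_map]; exact map_mono hQS)
  refine ⟨S, le_comap_map π S |>.trans ?_⟩
  rw [hS, ← map_map, comap_map_eq, QuotientGroup.ker_mk']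
  exact sup_le_sup_right (le_inf hQS (map_subtype_le _)) N

theorem le_of_le_sup_of_inf_le_frattini {S H N : Subgroup G} [N.Normal]
    [IsCoatomic (Subgroup S)] (hHS : H ≤ S) (hS : S ≤ H ⊔ N)
    (hN : N ⊓ S ≤ (frattini S).map S.subtype) : S ≤ H := by
  suffices H.subgroupOf S ⊔ frattini S = ⊤ from subgroupOf_eq_top.mp (frattini_nongenerating this)
  refine eq_top_iff.mpr fun s _ => ?_
  obtain ⟨h, hH, n, hn, hs⟩ := mem_sup_of_normal_right.mp (hS s.2)
  set h' : S := ⟨h, hHS hH⟩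
  have hmem : ((h'⁻¹ * s : S) : G) ∈ N ⊓ S := ⟨by simpa [h', ← hs] using hn, SetLike.coe_mem _⟩
  obtain ⟨t, ht, hts⟩ := hN hmem
  have hfr : h'⁻¹ * s ∈ frattini S := Subtype.ext hts ▸ ht
  simpa using mul_mem (mem_sup_left (show h' ∈ H.subgroupOf S from hH)) (mem_sup_right hfr)

theorem le_frattini_of_inter_sylow_le_frattini [Finite G] (N : Subgroup G) [N.Normal]
    (h : ∀ (p : ℕ), p.Prime → ∀ S : Sylow p G,
      N ⊓ (S : Subgroup G) ≤ (frattini ↥(S : Subgroup G)).map (S : Subgroup G).subtype) :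
    N ≤ frattini G := by
  refine le_iInf₂ fun M hM => ?_
  by_contra hNM
  have hMN : M ⊔ N = ⊤ := (hM.not_le_iff_codisjoint.mp hNM).eq_top
  obtain ⟨p, hp, hpM⟩ := Nat.exists_prime_and_dvd (mt index_eq_one.mp hM.ne_top)
  have := Fact.mk hp
  obtain ⟨S, hS⟩ := Sylow.exists_le_inf_sup_of_sup_eq_top hMN p
  have hSM : (S : Subgroup G) ≤ M :=
    (le_of_le_sup_of_inf_le_frattini inf_le_left hS (h p hp S)).trans inf_le_right
  exact S.not_dvd_index (hpM.trans (index_dvd_of_le hSM))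

end

/-- Tate's nilpotency criterion: if `N ⊴ G` satisfies `N ∩ S_p ≤ Φ(S_p)` for every prime `p`
and every Sylow `p`-subgroup `S_p` of `G`, then `N` is nilpotent. -/
theorem nilpotent_of_inter_sylow_le_frattini {G : Type*} [Group G] [Finite G]
    (N : Subgroup G) [N.Normal]
    (h : ∀ (p : ℕ), p.Prime → ∀ S : Sylow p G,
      N ⊓ (S : Subgroup G) ≤ (frattini ↥(S : Subgroup G)).map (S : Subgroup G).subtype) :
    Group.IsNilpotent N := by
  have hle := le_frattini_of_inter_sylow_le_frattini N h
  have : Group.IsNilpotent ↥(frattini G) := frattini_nilpotent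
  exact (Group.isNilpotent_congr (subgroupOfEquivOfLe hle)).mp inferInstance
end

section
/- Let G be a finite non-nilpotent group such that G/K is nilpotent for every non-trivial characteristic subgroup K of G, and suppose G has a minimal characteristic subgroup M that is an elementary abelian p-group. Then G has a normal Sylow p-subgroup. -/
/-- Let `G` be a finite non-nilpotent group all of whose quotients by non-trivial
characteristic subgroups are nilpotent, with a minimal characteristic subgroup `M` that is
elementary abelian for the prime `p`. Then `G` has a normal Sylow `p`-subgroup. -/
theorem normal_sylow_of_minimal_characteristic {G : Type*} [Group G] [Finite G]
    (hG : ¬ Group.IsNilpotent G)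
    (hquot : ∀ (K : Subgroup G) [K.Characteristic], K ≠ ⊥ → Group.IsNilpotent (G ⧸ K))
    (p : ℕ) (hp : p.Prime) (M : Subgroup G) [M.Characteristic] (hMne : M ≠ ⊥)
    (hmin : ∀ K : Subgroup G, K.Characteristic → K ≤ M → K = ⊥ ∨ K = M)
    (habelian : ∀ x ∈ M, ∀ y ∈ M, x * y = y * x) (hexp : ∀ x ∈ M, x ^ p = 1) :
    ∃ S : Sylow p G, (S : Subgroup G).Normal := by
  haveI : Fact p.Prime := ⟨hp⟩
  have hMp : IsPGroup p M := by
    intro x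
    exact ⟨1, by ext; simpa using hexp x x.2⟩
  haveI hnil : Group.IsNilpotent (G ⧸ M) := hquot M hMne
  obtain ⟨S⟩ := (inferInstance : Nonempty (Sylow p (G ⧸ M)))
  have hSnorm : (S : Subgroup (G ⧸ M)).Normal := by
    have := ((isNilpotent_of_finite_tfae (G := G ⧸ M)).out 0 3)
    exact this.mp hnil p ‹_› S
  let π := QuotientGroup.mk' M
  have hker : π.ker = M := QuotientGroup.ker_mk' M
  have hNp : IsPGroup p ((S : Subgroup (G ⧸ M)).comap π) :=
    S.isPGroup'.comap_of_ker_isPGroup π (by rw [hker]; exact hMp)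
  obtain ⟨P, hNP⟩ := hNp.exists_le_sylow
  have hPN : (P : Subgroup G) ≤ (S : Subgroup (G ⧸ M)).comap π := by
    obtain ⟨Q, hQ⟩ := (P.isPGroup'.map π).exists_le_sylow
    haveI := Sylow.unique_of_normal S hSnorm
    have : Q = S := Subsingleton.elim Q S
    rw [← Subgroup.map_le_iff_le_comap]
    exact this ▸ hQ
  have hEq : (P : Subgroup G) = (S : Subgroup (G ⧸ M)).comap π := le_antisymm hPN hNP
  exact ⟨P, hEq ▸ Subgroup.Normal.comap hSnorm π⟩
end

section
/- Every nilpotent subgroup of the symmetric group Sym(n) has order at most 2^n. -/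
/-!
Induction on the number of points. A nontrivial nilpotent `N ≤ Sym(α)` has a nontrivial centre
`Z`, so there are fewer `Z`-orbits than points, and `N` permutes the `Z`-orbits. By induction the
image of `N` in the permutations of the orbits has order at most `2 ^ #orbits`. An element of the
kernel commutes with `Z` and maps each orbit to itself, so it is determined by where it sends one
representative of each orbit: the kernel has order at most `∏ |ω|`. Finally
`2 ^ #orbits * ∏ |ω| = ∏ 2 |ω| ≤ ∏ 2 ^ |ω| = 2 ^ |α|`.
-/

open Equiv MulAction Subgroup

theorem Nat.two_mul_le_two_pow {k : ℕ} (hk : 1 ≤ k) : 2 * k ≤ 2 ^ k := by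
  obtain ⟨j, rfl⟩ := Nat.exists_eq_add_of_le' hk
  rw [pow_succ, mul_comm]
  exact Nat.mul_le_mul_right 2 Nat.lt_two_pow_self

theorem Nat.two_pow_card_mul_card_pi_le {ι : Type*} [Finite ι] (κ : ι → Type*)
    [∀ i, Finite (κ i)] [∀ i, Nonempty (κ i)] :
    2 ^ Nat.card ι * Nat.card (∀ i, κ i) ≤ 2 ^ Nat.card (Σ i, κ i) := by
  have := Fintype.ofFinite ι
  rw [Nat.card_pi, Nat.card_sigma, Nat.card_eq_fintype_card, ← Finset.card_univ,
    ← Finset.prod_const, ← Finset.prod_mul_distrib, ← Finset.prod_pow_eq_pow_sum]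
  exact Finset.prod_le_prod' fun i _ => Nat.two_mul_le_two_pow Nat.card_pos

namespace MulAction

variable {G α : Type*} [Group G] [MulAction G α]

instance orbitRel.Quotient.mulActionOfNormal (H : Subgroup G) [H.Normal] :
    MulAction G (orbitRel.Quotient H α) where
  smul g := Quotient.map' (g • ·) fun x y ⟨h, hxy⟩ =>
    ⟨⟨g * h * g⁻¹, Normal.conj_mem inferInstance _ h.2 g⟩,
      by simp [← hxy, Subgroup.smul_def, mul_smul]⟩
  one_smul ω := by
    induction ω using Quotient.inductionOn'
    exact congrArg Quotient.mk'' (one_smul G _)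
  mul_smul g g' ω := by
    induction ω using Quotient.inductionOn'
    exact congrArg Quotient.mk'' (mul_smul g g' _)

theorem orbitRel.Quotient.smul_mk (H : Subgroup G) [H.Normal] (g : G) (x : α) :
    g • (Quotient.mk'' x : orbitRel.Quotient H α) = Quotient.mk'' (g • x) :=
  rfl

theorem card_orbitRel_quotient_lt [Finite α] {g : G} {x : α} (hgx : g • x ≠ x) :
    Nat.card (orbitRel.Quotient G α) < Nat.card α := by
  have := Fintype.ofFinite α
  have := Fintype.ofFinite (orbitRel.Quotient G α)
  rw [Nat.card_eq_fintype_card, Nat.card_eq_fintype_card]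
  refine Fintype.card_lt_of_surjective_not_injective _ Quotient.mk''_surjective fun hinj => hgx ?_
  exact hinj (Quotient.sound ⟨g, rfl⟩)

theorem smul_orbitRel_center_out_injective [FaithfulSMul G α] :
    Function.Injective fun (g : G) (ω : orbitRel.Quotient (center G) α) => g • ω.out := by
  intro g g' hgg'
  refine FaithfulSMul.eq_of_smul_eq_smul (α := α) fun x => ?_
  obtain ⟨⟨z, hz⟩, hzx⟩ :
      ∃ z : center G, z • (Quotient.mk'' x : orbitRel.Quotient _ α).out = x := by
    rw [← mem_orbit_iff, ← orbitRel.Quotient.orbit_eq_orbit_out _ Quotient.out_eq']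
    exact orbitRel.Quotient.mem_orbit.mpr rfl
  have central (h : G) (y : α) : h • z • y = z • h • y := by
    rw [smul_smul, smul_smul, mem_center_iff.mp hz h]
  rw [← hzx, Subgroup.mk_smul, central, central]
  exact congrArg (z • ·) (congrFun hgg' _)

theorem card_ker_toPermHom_orbitRel_center_le [Finite α] [FaithfulSMul G α] :
    Nat.card (toPermHom G (orbitRel.Quotient (center G) α)).ker ≤
      Nat.card (∀ ω : orbitRel.Quotient (center G) α, ω.orbit) := by
  have := Quotient.finite (orbitRel (center G) α)
  refine Nat.card_le_card_of_injective
    (fun k ω => ⟨(k : G) • ω.out, orbitRel.Quotient.mem_orbit.mpr ?_⟩) fun k k' hkk' => ?_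
  · rw [← orbitRel.Quotient.smul_mk, Quotient.out_eq']
    exact Perm.ext_iff.mp k.2 ω
  · exact Subtype.ext <| smul_orbitRel_center_out_injective <|
      funext fun ω => congrArg Subtype.val (congrFun hkk' ω)

end MulAction

theorem Equiv.Perm.card_subgroup_le_two_pow_of_isNilpotent {α : Type*} [Finite α]
    (N : Subgroup (Perm α)) [Group.IsNilpotent N] : Nat.card N ≤ 2 ^ Nat.card α := by
  induction h : Nat.card α using Nat.strong_induction_on generalizing α with
  | _ n ih =>
  subst h
  rcases subsingleton_or_nontrivial N with hN | hN
  · rw [Nat.card_of_subsingleton (1 : N)]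
    exact Nat.one_le_two_pow
  obtain ⟨z, hz1⟩ : ∃ z : center N, z ≠ 1 :=
    ne_bot_iff_exists_ne_one.mp (Group.IsNilpotent.center_ne_bot N)
  obtain ⟨x, hzx⟩ : ∃ x : α, z • x ≠ x := by
    by_contra! h
    exact hz1 (FaithfulSMul.eq_of_smul_eq_smul (α := α) (by simpa using h))
  let β := orbitRel.Quotient (center N) α
  let φ := toPermHom N β
  have : Group.IsNilpotent φ.range := Group.nilpotent_of_surjective _ φ.rangeRestrict_surjective
  have hrange : Nat.card φ.range ≤ 2 ^ Nat.card β := ih _ (card_orbitRel_quotient_lt hzx) _ rfl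
  have := fun ω : β => ω.nonempty_orbit.to_subtype
  calc Nat.card N = Nat.card φ.range * Nat.card φ.ker := by
        rw [← index_ker, mul_comm, card_mul_index]
    _ ≤ 2 ^ Nat.card β * Nat.card (∀ ω : β, ω.orbit) :=
        Nat.mul_le_mul hrange card_ker_toPermHom_orbitRel_center_le
    _ ≤ 2 ^ Nat.card (Σ ω : β, ω.orbit) := Nat.two_pow_card_mul_card_pi_le _
    _ = 2 ^ Nat.card α := by rw [Nat.card_congr (selfEquivSigmaOrbits' (center N) α)]

/-- Every nilpotent subgroup of the symmetric group on `n` points has order at most `2^n`. -/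
theorem nilpotent_subgroup_perm_card_le {n : ℕ} (N : Subgroup (Equiv.Perm (Fin n)))
    (hN : Group.IsNilpotent N) :
    Nat.card N ≤ 2 ^ n := by
  simpa using Perm.card_subgroup_le_two_pow_of_isNilpotent N
end

section
/- Let G be a profinite group such that |G/K : Φ(G/K)| ≤ f for every open normal subgroup K of G, where f is a fixed constant. Then G has an open normal subgroup N of index at most f such that N is pro-(finite nilpotent). -/
/-!
Write `Φ_K ≤ G` for the preimage of `Φ(G/K)`. It contains `K`, so it is open when `K` is, its
index is `|G/K : Φ(G/K)| ≤ f`, and it shrinks with `K` because surjections map Frattini subgroups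
into Frattini subgroups. Choose an open normal `K₀` with `|G : Φ_{K₀}|` maximal. For any open
normal `K`, the subgroup `Φ_{K ∩ K₀} ≤ Φ_{K₀}` has no larger index, hence equals `Φ_{K₀}`, so
`N := Φ_{K₀} ≤ Φ_K`. Then `N/(K ∩ N)` embeds into the nilpotent group `Φ(G/K)`.
-/

namespace Subgroup

variable {G : Type*} [Group G]

def frattiniPreimage (K : Subgroup G) [K.Normal] : Subgroup G :=
  (frattini (G ⧸ K)).comap (QuotientGroup.mk' K)

instance (K : Subgroup G) [K.Normal] : (frattiniPreimage K).Normal :=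
  normal_comap _

theorem le_frattiniPreimage (K : Subgroup G) [K.Normal] : K ≤ frattiniPreimage K :=
  (QuotientGroup.ker_mk' K).ge.trans ((QuotientGroup.mk' K).ker_le_comap _)

theorem index_frattiniPreimage (K : Subgroup G) [K.Normal] :
    (frattiniPreimage K).index = (frattini (G ⧸ K)).index :=
  index_comap_of_surjective _ (QuotientGroup.mk'_surjective K)

theorem frattiniPreimage_mono {K L : Subgroup G} [K.Normal] [L.Normal] (hKL : K ≤ L) :
    frattiniPreimage K ≤ frattiniPreimage L := by
  let φ : G ⧸ K →* G ⧸ L := QuotientGroup.map K L (MonoidHom.id G) hKL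
  have hφ : φ.comp (QuotientGroup.mk' K) = QuotientGroup.mk' L := rfl
  rw [frattiniPreimage, frattiniPreimage, ← hφ, ← comap_comap]
  exact comap_mono <| frattini_le_comap_frattini_of_surjective <|
    QuotientGroup.map_surjective_of_surjective K L (MonoidHom.id G) QuotientGroup.mk_surjective hKL

theorem eq_of_le_of_index_le {H K : Subgroup G} [H.FiniteIndex] (hHK : H ≤ K)
    (hKH : H.index ≤ K.index) : H = K :=
  hHK.eq_of_not_lt fun hlt => (index_strictAnti hlt).not_ge hKH

theorem isNilpotent_quotient_subgroupOf_of_le_frattiniPreimage {N K : Subgroup G} [K.Normal]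
    [Finite (G ⧸ K)] (hNK : N ≤ frattiniPreimage K) :
    Group.IsNilpotent (N ⧸ K.subgroupOf N) := by
  have := frattini_nilpotent (G := G ⧸ K)
  let ψ : N →* frattini (G ⧸ K) :=
    ((QuotientGroup.mk' K).domRestrict N).codRestrict _ fun x => hNK x.2
  have hψ : ψ.ker = K.subgroupOf N := by
    rw [show ψ.ker = _ from MonoidHom.ker_codRestrict _ _ _, MonoidHom.ker_domRestrict,
      QuotientGroup.ker_mk']
  exact Group.nilpotent_of_mulEquiv <| (QuotientGroup.quotientMulEquivOfEq hψ.symm).trans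
    (QuotientGroup.quotientKerEquivRange ψ) |>.symm

section Topological

variable [TopologicalSpace G]

theorem exists_isOpen_forall_index_frattiniPreimage_le (f : ℕ)
    (h : ∀ (K : Subgroup G) [K.Normal], IsOpen (K : Set G) → (frattini (G ⧸ K)).index ≤ f) :
    ∃ (K₀ : Subgroup G) (_ : K₀.Normal), IsOpen (K₀ : Set G) ∧
      ∀ (K : Subgroup G) [K.Normal], IsOpen (K : Set G) →
        (frattiniPreimage K).index ≤ (frattiniPreimage K₀).index := by
  let S : Set ℕ := {n | ∃ (K : Subgroup G) (_ : K.Normal), IsOpen (K : Set G) ∧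
    (frattiniPreimage K).index = n}
  have hS : BddAbove S := ⟨f, by
    rintro _ ⟨K, _, hK, rfl⟩
    exact (index_frattiniPreimage K).trans_le (h K hK)⟩
  have hS₀ : S.Nonempty := ⟨_, ⊤, inferInstance, isOpen_univ, rfl⟩
  obtain ⟨K₀, _, hK₀, hK₀S⟩ := Nat.sSup_mem hS₀ hS
  exact ⟨K₀, inferInstance, hK₀, fun K _ hK => hK₀S ▸ le_csSup hS ⟨K, inferInstance, hK, rfl⟩⟩

variable [IsTopologicalGroup G]

theorem isOpen_frattiniPreimage {K : Subgroup G} [K.Normal] (hK : IsOpen (K : Set G)) :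
    IsOpen (frattiniPreimage K : Set G) :=
  isOpen_mono (le_frattiniPreimage K) hK

theorem frattiniPreimage_le_of_forall_index_le [CompactSpace G] {K₀ K : Subgroup G} [K₀.Normal]
    [K.Normal] (hK₀ : IsOpen (K₀ : Set G)) (hK : IsOpen (K : Set G))
    (hmax : ∀ (L : Subgroup G) [L.Normal], IsOpen (L : Set G) →
      (frattiniPreimage L).index ≤ (frattiniPreimage K₀).index) :
    frattiniPreimage K₀ ≤ frattiniPreimage K := by
  have hopen : IsOpen ((K ⊓ K₀ : Subgroup G) : Set G) := hK.inter hK₀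
  have := quotient_finite_of_isOpen _ (isOpen_frattiniPreimage hopen)
  have := finiteIndex_of_finite_quotient (H := frattiniPreimage (K ⊓ K₀))
  have heq : frattiniPreimage (K ⊓ K₀) = frattiniPreimage K₀ :=
    eq_of_le_of_index_le (frattiniPreimage_mono inf_le_right) (hmax _ hopen)
  exact heq ▸ frattiniPreimage_mono inf_le_left

end Topological

end Subgroup

theorem profinite_open_normal_pronilpotent_general {G : Type*} [Group G] [TopologicalSpace G]
    [IsTopologicalGroup G] [CompactSpace G]
    (f : ℕ)
    (h : ∀ (K : Subgroup G) [K.Normal], IsOpen (K : Set G) →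
      (frattini (G ⧸ K)).index ≤ f) :
    ∃ N : Subgroup G, N.Normal ∧ IsOpen (N : Set G) ∧ N.index ≤ f ∧
      ∀ (K : Subgroup G) [K.Normal], IsOpen (K : Set G) →
        Group.IsNilpotent (↥N ⧸ K.subgroupOf N) := by
  obtain ⟨K₀, _, hK₀, hmax⟩ := Subgroup.exists_isOpen_forall_index_frattiniPreimage_le f h
  refine ⟨Subgroup.frattiniPreimage K₀, inferInstance, Subgroup.isOpen_frattiniPreimage hK₀,
    (Subgroup.index_frattiniPreimage K₀).trans_le (h K₀ hK₀), fun K _ hK => ?_⟩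
  have := Subgroup.quotient_finite_of_isOpen K hK
  exact Subgroup.isNilpotent_quotient_subgroupOf_of_le_frattiniPreimage
    (Subgroup.frattiniPreimage_le_of_forall_index_le hK₀ hK hmax)

/-- Let `G` be a profinite group such that `|G/K : Φ(G/K)| ≤ f` for every open normal
subgroup `K`. Then `G` has an open normal subgroup `N` of index at most `f` that is
pro-(finite nilpotent), i.e. `N/(K ∩ N)` is nilpotent for every open normal `K ⊴ G`. -/
theorem profinite_open_normal_pronilpotent {G : Type*} [Group G] [TopologicalSpace G]
    [IsTopologicalGroup G] [CompactSpace G] [TotallyDisconnectedSpace G] [T2Space G]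
    (f : ℕ)
    (h : ∀ (K : Subgroup G) [K.Normal], IsOpen (K : Set G) →
      (frattini (G ⧸ K)).index ≤ f) :
    ∃ N : Subgroup G, N.Normal ∧ IsOpen (N : Set G) ∧ N.index ≤ f ∧
      ∀ (K : Subgroup G) [K.Normal], IsOpen (K : Set G) →
        Group.IsNilpotent (↥N ⧸ K.subgroupOf N) :=
  profinite_open_normal_pronilpotent_general f h
end
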